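/- Classical players with shared randomness cannot beat 10/13 in the game G'_{C5}: for every finite set Λ, every probability distribution μ on Λ, and every family of functions f_i : {0,1} × Λ → {0,1} (i ∈ ZMod 5), the probability, over a question drawn from the distribution of G'_{C5} and λ drawn from μ, that the outputs a_i = f_i(x_i, λ) satisfy the winning predicate of the question asked, is at most 10/13. -/

import Mathlib

/-- The strategy `f` wins the question `Q_a` of `G'_{C5}` (all inputs 1). -/
abbrev winsQa (f : ZMod 5 → ZMod 2 → ZMod 2) : Prop :=
  (∑ i : ZMod 5, f i 1) = 1

/-- The strategy `f` wins the question `Q_i` of `G'_{C5}` (player `i` gets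
input 1, the others 0). -/
abbrev winsQi (f : ZMod 5 → ZMod 2 → ZMod 2) (i : ZMod 5) : Prop :=
  f (i - 1) 0 + f i 1 + f (i + 1) 0 = 0

/-- The strategy `f` wins the question `Q'_i` of `G'_{C5}` (players `i-1` and
`i+1` get input 1, the others 0; the predicate is on all players except `i`). -/
abbrev winsQi' (f : ZMod 5 → ZMod 2 → ZMod 2) (i : ZMod 5) : Prop :=
  (∑ j ∈ Finset.univ.erase i,
    f j (if j = i - 1 ∨ j = i + 1 then (1 : ZMod 2) else 0)) = 0

lemma sum5 {M : Type*} [AddCommMonoid M] (g : ZMod 5 → M) :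
    ∑ i, g i = g 0 + g 1 + g 2 + g 3 + g 4 := by
  show ∑ i : Fin 5, g i = _
  exact Fin.sum_univ_five g

set_option maxRecDepth 4000 in
lemma key (a0 a1 a2 a3 a4 b0 b1 b2 b3 b4 : ZMod 2) :
    (if b0+b1+b2+b3+b4 = 1 then (3:ℕ) else 0)
    + ((if a4+b0+a1 = 0 then 1 else 0) + (if a0+b1+a2 = 0 then 1 else 0)
      + (if a1+b2+a3 = 0 then 1 else 0) + (if a2+b3+a4 = 0 then 1 else 0)
      + (if a3+b4+a0 = 0 then 1 else 0))
    + ((if b1+(a2+(a3+b4)) = 0 then 1 else 0) + (if b0+(b2+(a3+a4)) = 0 then 1 else 0)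
      + (if a0+(b1+(b3+a4)) = 0 then 1 else 0) + (if a0+(a1+(b2+b4)) = 0 then 1 else 0)
      + (if b0+(a1+(a2+b3)) = 0 then 1 else 0)) ≤ 10 := by
  revert a0 a1 a2 a3 a4 b0 b1 b2 b3 b4; decide

lemma wq'0 (f : ZMod 5 → ZMod 2 → ZMod 2) :
    winsQi' f 0 ↔ f 1 1 + (f 2 0 + (f 3 0 + f 4 1)) = 0 := by
  unfold winsQi'
  rw [show Finset.univ.erase (0 : ZMod 5) = {1,2,3,4} from by decide,
    Finset.sum_insert (by decide), Finset.sum_insert (by decide),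
    Finset.sum_insert (by decide), Finset.sum_singleton]
  simp (config := { decide := true })

lemma wq'1 (f : ZMod 5 → ZMod 2 → ZMod 2) :
    winsQi' f 1 ↔ f 0 1 + (f 2 1 + (f 3 0 + f 4 0)) = 0 := by
  unfold winsQi'
  rw [show Finset.univ.erase (1 : ZMod 5) = {0,2,3,4} from by decide,
    Finset.sum_insert (by decide), Finset.sum_insert (by decide),
    Finset.sum_insert (by decide), Finset.sum_singleton]
  simp (config := { decide := true })

lemma wq'2 (f : ZMod 5 → ZMod 2 → ZMod 2) :
    winsQi' f 2 ↔ f 0 0 + (f 1 1 + (f 3 1 + f 4 0)) = 0 := by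
  unfold winsQi'
  rw [show Finset.univ.erase (2 : ZMod 5) = {0,1,3,4} from by decide,
    Finset.sum_insert (by decide), Finset.sum_insert (by decide),
    Finset.sum_insert (by decide), Finset.sum_singleton]
  simp (config := { decide := true })

lemma wq'3 (f : ZMod 5 → ZMod 2 → ZMod 2) :
    winsQi' f 3 ↔ f 0 0 + (f 1 0 + (f 2 1 + f 4 1)) = 0 := by
  unfold winsQi'
  rw [show Finset.univ.erase (3 : ZMod 5) = {0,1,2,4} from by decide,
    Finset.sum_insert (by decide), Finset.sum_insert (by decide),
    Finset.sum_insert (by decide), Finset.sum_singleton]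
  simp (config := { decide := true })

lemma wq'4 (f : ZMod 5 → ZMod 2 → ZMod 2) :
    winsQi' f 4 ↔ f 0 1 + (f 1 0 + (f 2 0 + f 3 1)) = 0 := by
  unfold winsQi'
  rw [show Finset.univ.erase (4 : ZMod 5) = {0,1,2,3} from by decide,
    Finset.sum_insert (by decide), Finset.sum_insert (by decide),
    Finset.sum_insert (by decide), Finset.sum_singleton]
  simp (config := { decide := true })

set_option maxHeartbeats 1000000 in
lemma det (f : ZMod 5 → ZMod 2 → ZMod 2) :
    (3 : ℝ) * (if winsQa f then 1 else 0) +
      (∑ i : ZMod 5, (if winsQi f i then (1:ℝ) else 0)) +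
      (∑ i : ZMod 5, (if winsQi' f i then (1:ℝ) else 0)) ≤ 10 := by
  simp only [sum5]
  have hA : winsQa f ↔ f 0 1 + f 1 1 + f 2 1 + f 3 1 + f 4 1 = 1 := by
    unfold winsQa; rw [sum5]
  have h0 : winsQi f 0 ↔ f 4 0 + f 0 1 + f 1 0 = 0 := by
    unfold winsQi
    rw [show (0-1 : ZMod 5) = 4 from by decide, show (0+1 : ZMod 5) = 1 from by decide]
  have h1 : winsQi f 1 ↔ f 0 0 + f 1 1 + f 2 0 = 0 := by
    unfold winsQi; norm_num
  have h2 : winsQi f 2 ↔ f 1 0 + f 2 1 + f 3 0 = 0 := by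
    unfold winsQi; norm_num
  have h3 : winsQi f 3 ↔ f 2 0 + f 3 1 + f 4 0 = 0 := by
    unfold winsQi; norm_num
  have h4 : winsQi f 4 ↔ f 3 0 + f 4 1 + f 0 0 = 0 := by
    unfold winsQi
    rw [show (4-1 : ZMod 5) = 3 from by decide, show (4+1 : ZMod 5) = 0 from by decide]
  simp only [hA, h0, h1, h2, h3, h4, wq'0 f, wq'1 f, wq'2 f, wq'3 f, wq'4 f]
  have hk := key (f 0 0) (f 1 0) (f 2 0) (f 3 0) (f 4 0)
    (f 0 1) (f 1 1) (f 2 1) (f 3 1) (f 4 1)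
  have hc : ((if (f 0 1)+(f 1 1)+(f 2 1)+(f 3 1)+(f 4 1) = 1 then (3:ℕ) else 0)
      + ((if (f 4 0)+(f 0 1)+(f 1 0) = 0 then 1 else 0) + (if (f 0 0)+(f 1 1)+(f 2 0) = 0 then 1 else 0)
        + (if (f 1 0)+(f 2 1)+(f 3 0) = 0 then 1 else 0) + (if (f 2 0)+(f 3 1)+(f 4 0) = 0 then 1 else 0)
        + (if (f 3 0)+(f 4 1)+(f 0 0) = 0 then 1 else 0))
      + ((if (f 1 1)+((f 2 0)+((f 3 0)+(f 4 1))) = 0 then 1 else 0) + (if (f 0 1)+((f 2 1)+((f 3 0)+(f 4 0))) = 0 then 1 else 0)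
        + (if (f 0 0)+((f 1 1)+((f 3 1)+(f 4 0))) = 0 then 1 else 0) + (if (f 0 0)+((f 1 0)+((f 2 1)+(f 4 1))) = 0 then 1 else 0)
        + (if (f 0 1)+((f 1 0)+((f 2 0)+(f 3 1))) = 0 then 1 else 0)) : ℕ) ≤ 10 := hk
  have hr := Nat.cast_le (α := ℝ) |>.mpr hc
  push_cast at hr
  rw [mul_ite, mul_one, mul_zero]
  exact hr

open Classical in
/-- Classical players with shared randomness cannot beat `10/13` in `G'_{C5}`. -/
theorem gC5'_shared_randomness_le
    (Λ : Type*) [Fintype Λ] (μ : Λ → ℝ)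
    (hμ0 : ∀ l, 0 ≤ μ l) (hμ1 : ∑ l, μ l = 1)
    (f : ZMod 5 → ZMod 2 → Λ → ZMod 2) :
    (∑ l : Λ, μ l *
        ((3 / 13 : ℝ) * (if winsQa (fun i x => f i x l) then 1 else 0) +
          (∑ i : ZMod 5, (1 / 13 : ℝ) *
            (if winsQi (fun i x => f i x l) i then 1 else 0)) +
          (∑ i : ZMod 5, (1 / 13 : ℝ) *
            (if winsQi' (fun i x => f i x l) i then 1 else 0)))) ≤ 10 / 13 := by
  have hb : ∀ l : Λ,
      ((3 / 13 : ℝ) * (if winsQa (fun i x => f i x l) then 1 else 0) +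
        (∑ i : ZMod 5, (1 / 13 : ℝ) *
          (if winsQi (fun i x => f i x l) i then 1 else 0)) +
        (∑ i : ZMod 5, (1 / 13 : ℝ) *
          (if winsQi' (fun i x => f i x l) i then 1 else 0))) ≤ 10 / 13 := by
    intro l
    have hd := det (fun i x => f i x l)
    rw [← Finset.mul_sum, ← Finset.mul_sum]
    linarith
  calc (∑ l : Λ, μ l * _) ≤ ∑ l : Λ, μ l * (10 / 13 : ℝ) := by
        apply Finset.sum_le_sum
        intro l _
        exact mul_le_mul_of_nonneg_left (hb l) (hμ0 l)
    _ = 10 / 13 := by rw [← Finset.sum_mul, hμ1, one_mul]
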